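/- Let d be a prime, let n ≥ 1, let Γ be a symmetric n×n matrix over ZMod d with zero diagonal, let ω : ℂ be a primitive d-th root of unity (with ω^k for k : ZMod d meaning ω^(k.val)), and let ψ_Γ : (Fin n → ZMod d) → ℂ be the graph-state amplitude function ψ_Γ(x) = (d:ℝ)^(−n/2) · ω^(Σ_{u<v} Γ u v · x u · x v). Then for every w : Fin n and every nonzero γ : ZMod d, the γ-local scaling of Γ about w satisfies, for all x : Fin n → ZMod d, ψ_{Γ ∘_γ w}(x) = ψ_Γ(x'), where x' agrees with x except x'(w) = γ · x(w). (Equivalently, |G ∘_γ w⟩ = M_w(γ⁻¹)|G⟩ where M(γ)|k⟩ = |γk⟩.) -/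

import Mathlib

/-- The graph-state amplitude function of an adjacency matrix `Γ` over `ZMod d`:
`ψ_Γ(x) = d^(-n/2) · ω^(∑_{u<v} Γ u v · x u · x v)`. -/
noncomputable def graphState (d n : ℕ) (ω : ℂ) (Γ : Matrix (Fin n) (Fin n) (ZMod d)) :
    (Fin n → ZMod d) → ℂ := fun x =>
  (((d : ℝ) ^ (-(n : ℝ) / 2) : ℝ) : ℂ) *
    ω ^ (∑ u : Fin n, ∑ v : Fin n, if u < v then Γ u v * x u * x v else 0).val

/-- The `γ`-local scaling of `Γ` about the vertex `w`. -/
def localScaling {d n : ℕ} (Γ : Matrix (Fin n) (Fin n) (ZMod d)) (γ : ZMod d) (w : Fin n) :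
    Matrix (Fin n) (Fin n) (ZMod d) :=
  Matrix.of fun u v => if u = w ∨ v = w then γ * Γ u v else Γ u v

/- An off-diagonal edge meets `w` in at most one endpoint, so scaling the edge weight by `γ`
is the same as scaling the coordinate `x w` by `γ`. -/
theorem localScaling_apply_mul_mul {d n : ℕ} (Γ : Matrix (Fin n) (Fin n) (ZMod d))
    (γ : ZMod d) (w : Fin n) (x : Fin n → ZMod d) {u v : Fin n} (huv : u ≠ v) :
    localScaling Γ γ w u v * x u * x v =
      Γ u v * Function.update x w (γ * x w) u * Function.update x w (γ * x w) v := by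
  simp only [localScaling, Matrix.of_apply, Function.update_apply]
  by_cases hu : u = w
  · subst hu
    simp only [true_or, if_true, if_neg huv.symm]
    ring
  · by_cases hv : v = w
    · subst hv
      simp only [hu, or_true, if_true, if_false]
      ring
    · simp only [hu, hv, or_self, if_false]

theorem graphState_localScaling
    (d n : ℕ)
    (Γ : Matrix (Fin n) (Fin n) (ZMod d))
    (ω : ℂ)
    (w : Fin n) (γ : ZMod d) (x : Fin n → ZMod d) :
    graphState d n ω (localScaling Γ γ w) x
      = graphState d n ω Γ (Function.update x w (γ * x w)) := by
  unfold graphState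
  congr 3
  refine Finset.sum_congr rfl fun u _ => Finset.sum_congr rfl fun v _ => ?_
  split_ifs with huv
  · exact localScaling_apply_mul_mul Γ γ w x huv.ne
  · rfl
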